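/- arXiv:2512.21464 — 4 statements merged into one kernel-verified Lean document; each statement's English description precedes it below -/
import Mathlib

section
/- Let A, B ∈ ℝ^{n×n} be positive semidefinite with A positive definite. Then the matrix S := (√A)⁻¹ · √(√A·B·√A) · (√A)⁻¹ is positive semidefinite, satisfies S·A·Sᵀ = B and trace(A·S) = trace(√(√A·B·√A)), and S is the unique matrix T ∈ ℝ^{n×n} satisfying both T·A·Tᵀ = B and trace(A·T) = trace(√(√A·B·√A)). -/
open Matrix

/-- The positive semidefinite square root of a psd matrix (junk value `0` otherwise). -/
noncomputable def psdSqrt {n : ℕ} (M : Matrix (Fin n) (Fin n) ℝ) : Matrix (Fin n) (Fin n) ℝ :=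
  letI := Classical.propDecidable M.PosSemidef
  if h : M.PosSemidef then
    (h.1.eigenvectorUnitary : Matrix (Fin n) (Fin n) ℝ) *
      diagonal ((↑) ∘ (√·) ∘ h.1.eigenvalues) *
      (star h.1.eigenvectorUnitary : Matrix (Fin n) (Fin n) ℝ)
  else 0

/-- `trace √(√A·B·√A)`. -/
noncomputable def sqrtTr {n : ℕ} (A B : Matrix (Fin n) (Fin n) ℝ) : ℝ :=
  (psdSqrt (psdSqrt A * B * psdSqrt A)).trace

/-- `T` is an optimal transport matrix from `A` to `B`. -/
def IsOT {n : ℕ} (A B T : Matrix (Fin n) (Fin n) ℝ) : Prop :=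
  T * A * Tᵀ = B ∧ (A * T).trace = sqrtTr A B

/-- Squared Bures–Wasserstein distance. -/
noncomputable def W2sq {n : ℕ} (A B : Matrix (Fin n) (Fin n) ℝ) : ℝ :=
  A.trace + B.trace - 2 * sqrtTr A B

/-! With `R = √A` and `N = √(R B R)`, the substitution `X = R T R` turns the two conditions
on `T` into `X Xᵀ = N²` and `tr X = tr N`, and `S` corresponds to `X = N`. Writing
`N = U D Uᵀ` with `D = diag d`, the matrix `Y = Uᵀ X U` has rows of Euclidean norm `dᵢ`,
so `Yᵢᵢ ≤ dᵢ`; equality of traces forces `Yᵢᵢ = dᵢ`, which leaves no room for off-diagonal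
entries: `Y = D`, i.e. `X = N`. -/

open scoped MatrixOrder

theorem Matrix.eq_diagonal_of_mul_transpose_eq {ι : Type*} [Fintype ι] [DecidableEq ι]
    {d : ι → ℝ} (hd : 0 ≤ d) {Y : Matrix ι ι ℝ} (h : Y * Yᵀ = diagonal d * diagonal d)
    (htr : Y.trace = ∑ i, d i) : Y = diagonal d := by
  have hrow (i : ι) : ∑ j, Y i j ^ 2 = d i ^ 2 := by
    rw [diagonal_mul_diagonal] at h
    simpa [mul_apply, sq] using congrFun (congrFun h i) i
  have hdiag_le (i : ι) : Y i i ≤ d i :=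
    (abs_le_of_sq_le_sq' (hrow i ▸ Finset.single_le_sum (fun j _ ↦ sq_nonneg (Y i j))
      (Finset.mem_univ i)) (hd i)).2
  have hdiag (i : ι) : Y i i = d i :=
    (Finset.sum_eq_sum_iff_of_le fun i _ ↦ hdiag_le i).1 htr i (Finset.mem_univ i)
  have hoff (i j : ι) (hij : i ≠ j) : Y i j = 0 := by
    have hrest : ∑ k ∈ Finset.univ.erase i, Y i k ^ 2 = 0 := by
      have := hrow i
      rw [← Finset.add_sum_erase _ _ (Finset.mem_univ i), hdiag i] at this
      linarith
    exact pow_eq_zero_iff two_ne_zero |>.1 <| (Finset.sum_eq_zero_iff_of_nonneg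
      fun k _ ↦ sq_nonneg (Y i k)).1 hrest j (Finset.mem_erase.2 ⟨hij.symm, Finset.mem_univ j⟩)
  ext i j
  obtain rfl | hij := eq_or_ne i j
  · simp [hdiag]
  · simp [hoff i j hij, hij]

theorem Matrix.PosSemidef.eq_of_mul_transpose_eq_mul_self {ι : Type*} [Fintype ι]
    [DecidableEq ι] {N X : Matrix ι ι ℝ} (hN : N.PosSemidef) (h : X * Xᵀ = N * N)
    (htr : X.trace = N.trace) : X = N := by
  set φ := (Unitary.conjStarAlgAut ℝ (Matrix ι ι ℝ) hN.1.eigenvectorUnitary).symm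
  have hφN : φ N = diagonal hN.1.eigenvalues := by
    rw [StarAlgEquiv.symm_apply_eq]
    exact hN.1.spectral_theorem
  have htrφ (M : Matrix ι ι ℝ) : (φ M).trace = M.trace := by
    simp [φ, trace_mul_cycle]
  refine EquivLike.injective φ (hφN ▸ ?_)
  refine eq_diagonal_of_mul_transpose_eq hN.eigenvalues_nonneg ?_ ?_
  · rw [← conjTranspose_eq_transpose_of_trivial, ← star_eq_conjTranspose, ← map_star, ← map_mul,
      star_eq_conjTranspose, conjTranspose_eq_transpose_of_trivial, h, map_mul, hφN]
  · rw [htrφ, htr, ← htrφ, hφN, trace_diagonal]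

theorem psdSqrt_eq_cfcSqrt {n : ℕ} {M : Matrix (Fin n) (Fin n) ℝ} (hM : M.PosSemidef) :
    psdSqrt M = CFC.sqrt M := by
  rw [CFC.sqrt_eq_real_sqrt M hM.nonneg, cfcₙ_eq_cfc, hM.1.cfc_eq, IsHermitian.cfc,
    Unitary.conjStarAlgAut_apply, psdSqrt, dif_pos hM]
  rfl

theorem posSemidef_psdSqrt {n : ℕ} {M : Matrix (Fin n) (Fin n) ℝ} (hM : M.PosSemidef) :
    (psdSqrt M).PosSemidef :=
  psdSqrt_eq_cfcSqrt hM ▸ nonneg_iff_posSemidef.1 (CFC.sqrt_nonneg M)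

theorem psdSqrt_mul_self {n : ℕ} {M : Matrix (Fin n) (Fin n) ℝ} (hM : M.PosSemidef) :
    psdSqrt M * psdSqrt M = M :=
  psdSqrt_eq_cfcSqrt hM ▸ CFC.sqrt_mul_sqrt_self M hM.nonneg

theorem transpose_psdSqrt {n : ℕ} {M : Matrix (Fin n) (Fin n) ℝ} (hM : M.PosSemidef) :
    (psdSqrt M)ᵀ = psdSqrt M :=
  conjTranspose_eq_transpose_of_trivial (psdSqrt M) ▸ (posSemidef_psdSqrt hM).1

theorem isUnit_psdSqrt {n : ℕ} {M : Matrix (Fin n) (Fin n) ℝ} (hM : M.PosDef) :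
    IsUnit (psdSqrt M) :=
  isUnit_of_mul_isUnit_left ((psdSqrt_mul_self hM.posSemidef).symm ▸ hM.isUnit)

/-- For psd `A, B` with `A` positive definite, the matrix
`S = (√A)⁻¹ √(√A B √A) (√A)⁻¹` is psd, is a transport matrix from `A` to `B`,
achieves `trace (A·S) = trace √(√A B √A)`, and is the unique such matrix. -/
theorem stmt0 {n : ℕ} (A B : Matrix (Fin n) (Fin n) ℝ)
    (hA : A.PosDef) (hB : B.PosSemidef)
    (S : Matrix (Fin n) (Fin n) ℝ)
    (hS : S = (psdSqrt A)⁻¹ * psdSqrt (psdSqrt A * B * psdSqrt A) * (psdSqrt A)⁻¹) :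
    S.PosSemidef ∧ S * A * Sᵀ = B ∧ (A * S).trace = sqrtTr A B ∧
      ∀ T : Matrix (Fin n) (Fin n) ℝ,
        T * A * Tᵀ = B → (A * T).trace = sqrtTr A B → T = S := by
  set R := psdSqrt A
  have hRR : R * R = A := psdSqrt_mul_self hA.posSemidef
  have hRt : Rᵀ = R := transpose_psdSqrt hA.posSemidef
  have hRu : IsUnit R := isUnit_psdSqrt hA
  have hRdet : IsUnit R.det := (isUnit_iff_isUnit_det R).1 hRu
  have hRBR : (R * B * R).PosSemidef := by simpa [hRt] using hB.conjTranspose_mul_mul_same R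
  set N := psdSqrt (R * B * R)
  have hN : N.PosSemidef := posSemidef_psdSqrt hRBR
  have hNN : N * N = R * B * R := psdSqrt_mul_self hRBR
  have hNt : Nᵀ = N := transpose_psdSqrt hRBR
  have hsubst (T : Matrix (Fin n) (Fin n) ℝ) :
      R * (T * A * Tᵀ) * R = (R * T * R) * (R * T * R)ᵀ := by
    simp only [← hRR, transpose_mul, hRt, Matrix.mul_assoc]
  have htr (T : Matrix (Fin n) (Fin n) ℝ) : (A * T).trace = (R * T * R).trace := by
    rw [← hRR, trace_mul_cycle R T R]
  have hcancel (P Q : Matrix (Fin n) (Fin n) ℝ) (h : R * P * R = R * Q * R) : P = Q :=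
    hRu.mul_left_cancel (hRu.mul_right_cancel h)
  have hRSR : R * S * R = N := by
    rw [hS, Matrix.mul_assoc, nonsing_inv_mul_cancel_right R _ hRdet,
      mul_nonsing_inv_cancel_left R _ hRdet]
  refine ⟨?_, hcancel _ _ ?_, ?_, fun T hT hTr ↦ hcancel _ _ ?_⟩
  · simpa [hS, transpose_nonsing_inv, hRt] using hN.mul_mul_conjTranspose_same R⁻¹
  · rw [hsubst, hRSR, hNt, hNN]
  · rw [htr, hRSR]
    rfl
  · rw [hRSR]
    exact hN.eq_of_mul_transpose_eq_mul_self (by rw [← hsubst, hT, hNN]) (by rw [← htr, hTr]; rfl)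
end

section
/- Let A₁, A₂ ∈ ℝ^{n×n} be positive semidefinite and let G₁ ∈ ℝ^{n×n} satisfy G₁·G₁ᵀ = A₁. Then: (a) trace(√(G₁ᵀ·A₂·G₁)) = trace(√(√A₁·A₂·√A₁)); (b) there exists G₂ ∈ ℝ^{n×n} with G₂·G₂ᵀ = A₂ such that G₁ᵀ·G₂ is positive semidefinite; and (c) for every G₂ with G₂·G₂ᵀ = A₂, the matrix G₁ᵀ·G₂ is positive semidefinite if and only if trace(G₁ᵀ·G₂) = trace(√(√A₁·A₂·√A₁)). -/
/-!
Every square matrix factors as `M = U * √(Mᴴ * M)` with `U` unitary: matrices with the same Gram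
matrix `Mᴴ * M` induce the same norms `‖M v‖`, so they differ by an isometry, defined on the range
and then extended to the whole space. Conjugating by `U` gives `√(M * Mᴴ) = U * √(Mᴴ * M) * Uᴴ`,
hence `tr √(Mᴴ * M) = tr √(M * Mᴴ)`. Applied to `√A₂ * G₁` and `√A₂ * √A₁`, whose products
`X * Xᴴ` agree, this gives (a). For (b) take `G₂ = √A₂ * U`, where `√A₂ * G₁ = U * P`. For (c),
`T = G₁ᵀ * G₂` satisfies `T * Tᵀ = G₁ᵀ * A₂ * G₁`, so by (a) the trace condition reads
`tr T = tr √(Tᵀ * T)`; with `T = U * P`, the equality `tr (U * P) = tr P` forces `U * P = P`.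
-/

open Matrix

open scoped MatrixOrder ComplexOrder

theorem LinearIsometryEquiv.exists_comp_eq_of_norm_eq {𝕜 V : Type*} [RCLike 𝕜]
    [NormedAddCommGroup V] [InnerProductSpace 𝕜 V] [FiniteDimensional 𝕜 V] {f g : V →ₗ[𝕜] V}
    (h : ∀ v, ‖f v‖ = ‖g v‖) : ∃ E : V ≃ₗᵢ[𝕜] V, ∀ v, E (g v) = f v := by
  have hker : LinearMap.ker g ≤ LinearMap.ker f := fun v hv => by
    rw [LinearMap.mem_ker, ← norm_eq_zero, h, LinearMap.mem_ker.mp hv, norm_zero]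
  let L₀ := (LinearMap.ker g).liftQ f hker ∘ₗ g.quotKerEquivRange.symm.toLinearMap
  have hL₀ : ∀ v, L₀ ⟨g v, LinearMap.mem_range_self g v⟩ = f v := fun v => by
    simp only [L₀, LinearMap.comp_apply, LinearEquiv.coe_coe,
      LinearMap.quotKerEquivRange_symm_apply_image]
    rfl
  let L : LinearMap.range g →ₗᵢ[𝕜] V :=
    { toLinearMap := L₀
      norm_map' := by
        rintro ⟨_, v, rfl⟩
        exact (congrArg norm (hL₀ v)).trans (h v) }
  exact ⟨L.extend.toLinearIsometryEquiv rfl, fun v =>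
    (L.extend_apply ⟨g v, LinearMap.mem_range_self g v⟩).trans (hL₀ v)⟩

namespace Matrix

variable {𝕜 : Type*} [RCLike 𝕜] {n : Type*} [Fintype n] [DecidableEq n]

theorem exists_mem_unitaryGroup_mul_eq_of_conjTranspose_mul_self_eq {X Y : Matrix n n 𝕜}
    (h : Xᴴ * X = Yᴴ * Y) : ∃ U ∈ unitaryGroup n 𝕜, U * Y = X := by
  let e := toEuclideanCLM (n := n) (𝕜 := 𝕜)
  have hXY : (e X).adjoint ∘L e X = (e Y).adjoint ∘L e Y := by
    rw [← ContinuousLinearMap.star_eq_adjoint, ← ContinuousLinearMap.star_eq_adjoint,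
      ← ContinuousLinearMap.mul_def, ← ContinuousLinearMap.mul_def, ← map_star, ← map_star,
      ← map_mul, ← map_mul, star_eq_conjTranspose, star_eq_conjTranspose, h]
  obtain ⟨E, hE⟩ := LinearIsometryEquiv.exists_comp_eq_of_norm_eq
    (f := (e X).toLinearMap) (g := (e Y).toLinearMap) fun v => by
    simp only [ContinuousLinearMap.coe_coe,
      ContinuousLinearMap.apply_norm_eq_sqrt_inner_adjoint_left, hXY]
  refine ⟨e.symm E, Unitary.map_mem _ (Unitary.linearIsometryEquiv.symm E).2, ?_⟩
  rw [← e.symm_apply_apply Y, ← map_mul, StarAlgEquiv.symm_apply_eq]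
  ext1 v
  exact hE v

lemma conjTranspose_sqrt (M : Matrix n n 𝕜) : (CFC.sqrt M)ᴴ = CFC.sqrt M := by
  rw [← star_eq_conjTranspose, (CFC.sqrt_nonneg M).isSelfAdjoint.star_eq]

theorem exists_mem_unitaryGroup_mul_sqrt_eq (M : Matrix n n 𝕜) :
    ∃ U ∈ unitaryGroup n 𝕜, U * CFC.sqrt (Mᴴ * M) = M := by
  refine exists_mem_unitaryGroup_mul_eq_of_conjTranspose_mul_self_eq ?_
  rw [conjTranspose_sqrt, CFC.sqrt_mul_sqrt_self _ (posSemidef_conjTranspose_mul_self M).nonneg]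

theorem mul_eq_self_of_trace_mul_eq {U P : Matrix n n 𝕜} (hU : U ∈ unitaryGroup n 𝕜)
    (hP : P.PosSemidef) (h : (U * P).trace = P.trace) : U * P = P := by
  set B := CFC.sqrt P
  have hBB : B * B = P := CFC.sqrt_mul_sqrt_self P hP.nonneg
  have hUU : Uᴴ * U = 1 := mem_unitaryGroup_iff'.mp hU
  have hPh : Pᴴ = P := hP.isHermitian.eq
  have hUP : (B * U * B).trace = P.trace := by
    rw [trace_mul_cycle, hBB, trace_mul_comm, h]
  have hUP' : (B * Uᴴ * B).trace = P.trace := by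
    calc (B * Uᴴ * B).trace = ((U * P)ᴴ).trace := by
          rw [trace_mul_cycle, hBB, conjTranspose_mul, hPh]
      _ = P.trace := by rw [trace_conjTranspose, h, ← trace_conjTranspose, hPh]
  -- `‖√P - U * √P‖²` is `2 tr P - 2 Re tr (U * P)`, which vanishes by assumption.
  have hzero : ((B - U * B)ᴴ * (B - U * B)).trace = 0 := by
    have : (B - U * B)ᴴ * (B - U * B) = B * B - B * U * B - B * Uᴴ * B + B * (Uᴴ * U) * B := by
      rw [conjTranspose_sub, conjTranspose_mul, conjTranspose_sqrt]
      noncomm_ring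
    rw [this, hUU, mul_one, trace_add, trace_sub, trace_sub, hUP, hUP', hBB]
    ring
  have hUB : U * B = B := (sub_eq_zero.mp (trace_conjTranspose_mul_self_eq_zero_iff.mp hzero)).symm
  rw [← hBB, ← mul_assoc, hUB]

theorem trace_sqrt_conjTranspose_mul_self (M : Matrix n n 𝕜) :
    (CFC.sqrt (Mᴴ * M)).trace = (CFC.sqrt (M * Mᴴ)).trace := by
  obtain ⟨U, hU, hM⟩ := exists_mem_unitaryGroup_mul_sqrt_eq M
  set P := CFC.sqrt (Mᴴ * M)
  have hUU : Uᴴ * U = 1 := mem_unitaryGroup_iff'.mp hU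
  have hsqrt : CFC.sqrt (M * Mᴴ) = U * P * Uᴴ := by
    refine CFC.sqrt_unique ?_ ((CFC.sqrt_nonneg _).posSemidef.mul_mul_conjTranspose_same U).nonneg
    rw [← hM, conjTranspose_mul, conjTranspose_sqrt]
    calc U * P * Uᴴ * (U * P * Uᴴ) = U * P * (Uᴴ * U) * P * Uᴴ := by noncomm_ring
      _ = U * P * (P * Uᴴ) := by rw [hUU]; noncomm_ring
  rw [hsqrt, trace_mul_cycle, hUU, one_mul]

theorem posSemidef_iff_trace_eq_trace_sqrt (T : Matrix n n 𝕜) :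
    T.PosSemidef ↔ T.trace = (CFC.sqrt (Tᴴ * T)).trace := by
  refine ⟨fun hT => ?_, fun h => ?_⟩
  · rw [hT.isHermitian.eq, CFC.sqrt_mul_self T hT.nonneg]
  · obtain ⟨U, hU, hT⟩ := exists_mem_unitaryGroup_mul_sqrt_eq T
    set P := CFC.sqrt (Tᴴ * T)
    have hP : P.PosSemidef := (CFC.sqrt_nonneg _).posSemidef
    rwa [← hT, mul_eq_self_of_trace_mul_eq hU hP (by rw [hT, h])]

theorem trace_sqrt_conjTranspose_mul_mul_eq {A B G : Matrix n n 𝕜} (hB : B.PosSemidef)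
    (hG : G * Gᴴ = A) :
    (CFC.sqrt (Gᴴ * B * G)).trace = (CFC.sqrt (CFC.sqrt A * B * CFC.sqrt A)).trace := by
  set R := CFC.sqrt A
  set S := CFC.sqrt B
  have hRh : Rᴴ = R := conjTranspose_sqrt A
  have hSh : Sᴴ = S := conjTranspose_sqrt B
  have hRR : R * R = A := CFC.sqrt_mul_sqrt_self A (hG ▸ posSemidef_self_mul_conjTranspose G).nonneg
  have hSS : S * S = B := CFC.sqrt_mul_sqrt_self B hB.nonneg
  calc (CFC.sqrt (Gᴴ * B * G)).trace = (CFC.sqrt ((S * G)ᴴ * (S * G))).trace := by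
        rw [conjTranspose_mul, hSh, ← hSS]; simp only [mul_assoc]
    _ = (CFC.sqrt ((S * R)ᴴ * (S * R))).trace := by
        rw [trace_sqrt_conjTranspose_mul_self, trace_sqrt_conjTranspose_mul_self,
          conjTranspose_mul, conjTranspose_mul, hSh, hRh]
        congr 2
        calc S * G * (Gᴴ * S) = S * (G * Gᴴ) * S := by noncomm_ring
          _ = S * R * (R * S) := by rw [hG, ← hRR]; noncomm_ring
    _ = (CFC.sqrt (R * B * R)).trace := by
        rw [conjTranspose_mul, hSh, hRh, ← hSS]; simp only [mul_assoc]

theorem exists_mul_conjTranspose_eq_and_posSemidef (G₁ : Matrix n n 𝕜) {B : Matrix n n 𝕜}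
    (hB : B.PosSemidef) : ∃ G₂, G₂ * G₂ᴴ = B ∧ (G₁ᴴ * G₂).PosSemidef := by
  set S := CFC.sqrt B
  have hSh : Sᴴ = S := conjTranspose_sqrt B
  obtain ⟨U, hU, hSG⟩ := exists_mem_unitaryGroup_mul_sqrt_eq (S * G₁)
  set P := CFC.sqrt ((S * G₁)ᴴ * (S * G₁))
  have hUU : Uᴴ * U = 1 := mem_unitaryGroup_iff'.mp hU
  have hUU' : U * Uᴴ = 1 := mem_unitaryGroup_iff.mp hU
  refine ⟨S * U, ?_, ?_⟩
  · rw [conjTranspose_mul, hSh, mul_assoc, ← mul_assoc U, hUU', one_mul,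
      CFC.sqrt_mul_sqrt_self B hB.nonneg]
  · have : G₁ᴴ * S = P * Uᴴ := by
      rw [← hSh, ← conjTranspose_mul, ← hSG, conjTranspose_mul, conjTranspose_sqrt]
    rw [← mul_assoc, this, mul_assoc, hUU, mul_one]
    exact (CFC.sqrt_nonneg _).posSemidef

end Matrix

lemma psdSqrt_eq_sqrt {n : ℕ} (M : Matrix (Fin n) (Fin n) ℝ) : psdSqrt M = CFC.sqrt M := by
  by_cases h : M.PosSemidef
  · rw [psdSqrt, dif_pos h, CFC.sqrt_eq_cfc, cfc_nnreal_eq_real _ M h.nonneg, h.1.cfc_eq]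
    simp only [IsHermitian.cfc, Unitary.conjStarAlgAut_apply]
    congr 3
    funext i
    simp [Real.coe_toNNReal', h.eigenvalues_nonneg i]
  · rw [psdSqrt, dif_neg h, CFC.sqrt_of_not_nonneg (by rwa [nonneg_iff_posSemidef])]

theorem stmt6_general {n : ℕ} (A₁ A₂ G₁ : Matrix (Fin n) (Fin n) ℝ)
    (hA₂ : A₂.PosSemidef) (hG₁ : G₁ * G₁ᵀ = A₁) :
    (psdSqrt (G₁ᵀ * A₂ * G₁)).trace = sqrtTr A₁ A₂ ∧
      (∃ G₂ : Matrix (Fin n) (Fin n) ℝ, G₂ * G₂ᵀ = A₂ ∧ (G₁ᵀ * G₂).PosSemidef) ∧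
      (∀ G₂ : Matrix (Fin n) (Fin n) ℝ, G₂ * G₂ᵀ = A₂ →
        ((G₁ᵀ * G₂).PosSemidef ↔ (G₁ᵀ * G₂).trace = sqrtTr A₁ A₂)) := by
  simp only [sqrtTr, psdSqrt_eq_sqrt, ← conjTranspose_eq_transpose_of_trivial] at hG₁ ⊢
  have ha := trace_sqrt_conjTranspose_mul_mul_eq hA₂ hG₁
  refine ⟨ha, exists_mul_conjTranspose_eq_and_posSemidef G₁ hA₂, fun G₂ hG₂ => ?_⟩
  rw [posSemidef_iff_trace_eq_trace_sqrt, trace_sqrt_conjTranspose_mul_self, ← ha,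
    conjTranspose_mul, conjTranspose_conjTranspose, mul_assoc, ← mul_assoc G₂, hG₂, mul_assoc]

/-- For psd `A₁, A₂` and any Green's matrix `G₁` of `A₁`:
(a) `trace √(G₁ᵀ A₂ G₁) = trace √(√A₁ A₂ √A₁)`;
(b) some Green's matrix `G₂` of `A₂` satisfies `G₁ᵀ G₂ ⪰ 0`;
(c) for every Green's matrix `G₂` of `A₂`,
    `G₁ᵀ G₂ ⪰ 0 ↔ trace (G₁ᵀ G₂) = trace √(√A₁ A₂ √A₁)`. -/
theorem stmt6 {n : ℕ} (A₁ A₂ G₁ : Matrix (Fin n) (Fin n) ℝ)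
    (hA₁ : A₁.PosSemidef) (hA₂ : A₂.PosSemidef) (hG₁ : G₁ * G₁ᵀ = A₁) :
    (psdSqrt (G₁ᵀ * A₂ * G₁)).trace = sqrtTr A₁ A₂ ∧
      (∃ G₂ : Matrix (Fin n) (Fin n) ℝ, G₂ * G₂ᵀ = A₂ ∧ (G₁ᵀ * G₂).PosSemidef) ∧
      (∀ G₂ : Matrix (Fin n) (Fin n) ℝ, G₂ * G₂ᵀ = A₂ →
        ((G₁ᵀ * G₂).PosSemidef ↔ (G₁ᵀ * G₂).trace = sqrtTr A₁ A₂)) :=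
  stmt6_general A₁ A₂ G₁ hA₂ hG₁
end

section
/- Let H be a real separable Hilbert space, let A and B be positive compact operators on H with ker(A) ⊆ ker(B), let √A be the positive square root of A, and let R be the positive square root of the positive compact operator √A ∘ B ∘ √A. Then the following are equivalent: (i) there exists c ≥ 0 such that ⟨R x, x⟩ ≤ c·⟨A x, x⟩ for all x ∈ H; (ii) there exists a positive continuous linear operator T on H with R = √A ∘ T ∘ √A. Moreover, if range(√B) ⊆ range(√A) (where √B is the positive square root of B), then (i) and (ii) hold. -/
/-!
(ii) ⇒ (i) is immediate: `⟪√A T √A x, x⟫ = ⟪T √A x, √A x⟫ ≤ ‖T‖ ⟪A x, x⟫`.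

(i) ⇒ (ii): Cauchy–Schwarz for the form of `R` turns (i) into `⟪R x, y⟫ ≤ c ‖√A x‖ ‖√A y‖`.
Douglas' lemma (`‖X x‖ ≤ c ‖Y x‖` implies `X = Z Y`) is applied twice: first `R = Z √A`, hence
`R = √A Z†`; then, with `P` the projection onto the closure of `range √A`, the bound
`‖P Z† x‖ ≤ c ‖√A x‖` gives `P Z† = T₀ √A`, so `R = √A T₀ √A`. Compressing the symmetric part
of `T₀` by `P` makes it positive.

If `range √B ⊆ range √A`, the closed graph theorem gives `√B = √A C`, so
`‖R x‖ = ‖√B √A x‖ ≤ ‖C‖ ‖A x‖`. That `R² ≤ κ² A²` forces `R ≤ κ A` is Heinz's inequality: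
writing `R = W A` with `‖W‖ ≤ κ`, the sequence `n ↦ ‖√A (W†)ⁿ x‖` is log-convex and `O(κⁿ)`,
hence its first ratio is at most `κ`.
-/

open ContinuousLinearMap
open scoped RealInnerProductSpace

theorem le_mul_of_sq_le_mul_of_le_mul_pow {g : ℕ → ℝ} (hg : ∀ n, 0 ≤ g n)
    (hlc : ∀ n, g (n + 1) ^ 2 ≤ g n * g (n + 2)) {c M : ℝ} (hc : 0 < c)
    (hM : ∀ n, g n ≤ M * c ^ n) : g 1 ≤ c * g 0 := by
  by_contra! hlt
  have hg0 : 0 < g 0 := by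
    refine (hg 0).lt_of_ne' fun h0 ↦ ?_
    have hsq : g 1 ^ 2 ≤ 0 := by simpa [h0] using hlc 0
    rw [h0, mul_zero] at hlt
    nlinarith
  have hratio : ∀ n, g n * g 1 ≤ g (n + 1) * g 0 := by
    intro n
    induction n with
    | zero => rw [mul_comm]
    | succ n ih =>
      rcases (hg n).eq_or_lt with hn | hn
      · have hsq : g (n + 1) ^ 2 ≤ 0 := by simpa [← hn] using hlc n
        rw [pow_eq_zero_iff two_ne_zero |>.1 (le_antisymm hsq (sq_nonneg _)), zero_mul]
        exact mul_nonneg (hg _) hg0.le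
      · refine le_of_mul_le_mul_left ?_ hn
        nlinarith [hlc n, mul_le_mul_of_nonneg_left ih (hg (n + 1)), hg 1, hg (n + 1)]
  set r := g 1 / g 0
  have hcr : c < r := (lt_div_iff₀ hg0).2 hlt
  have hgrowth : ∀ n, g 0 * r ^ n ≤ g n := by
    intro n
    induction n with
    | zero => simp
    | succ n ih =>
      calc g 0 * r ^ (n + 1) = g 0 * r ^ n * r := by ring
        _ ≤ g n * r := mul_le_mul_of_nonneg_right ih (hc.le.trans hcr.le)
        _ = g n * g 1 / g 0 := mul_div_assoc _ _ _ |>.symm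
        _ ≤ g (n + 1) := (div_le_iff₀ hg0).2 (hratio n)
  obtain ⟨n, hn⟩ := pow_unbounded_of_one_lt (M / g 0) ((one_lt_div hc).2 hcr)
  have : M * c ^ n < g 0 * r ^ n := by
    rw [div_pow, lt_div_iff₀ (pow_pos hc n)] at hn
    calc M * c ^ n = g 0 * (M / g 0 * c ^ n) := by field_simp
      _ < g 0 * r ^ n := mul_lt_mul_of_pos_left hn hg0
  linarith [hgrowth n, hM n]

section Factorization

variable {𝕜 E F G : Type*} [RCLike 𝕜] [NormedAddCommGroup E] [NormedSpace 𝕜 E]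
  [NormedAddCommGroup F] [InnerProductSpace 𝕜 F] [CompleteSpace F]
  [NormedAddCommGroup G] [NormedSpace 𝕜 G]

theorem ContinuousLinearMap.exists_eq_comp_of_norm_le [CompleteSpace G] (X : E →L[𝕜] G)
    (Y : E →L[𝕜] F) {c : ℝ} (hc : 0 ≤ c) (h : ∀ x, ‖X x‖ ≤ c * ‖Y x‖) :
    ∃ Z : F →L[𝕜] G, ‖Z‖ ≤ c ∧ X = Z ∘L Y := by
  set N := (LinearMap.range (Y : E →ₗ[𝕜] F)).topologicalClosure
  have : CompleteSpace N := (Submodule.isClosed_topologicalClosure _).completeSpace_coe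
  let e : E →ₗ[𝕜] N := (Y : E →ₗ[𝕜] F).codRestrict N
    fun x ↦ Submodule.le_topologicalClosure _ (LinearMap.mem_range_self _ x)
  have he : DenseRange e := by
    rw [DenseRange, Subtype.dense_iff, ← Set.range_comp]
    exact (Submodule.topologicalClosure_coe _).le
  set Z₀ := (X : E →ₗ[𝕜] G).extendOfNorm e
  refine ⟨Z₀ ∘L N.orthogonalProjectionOnto, ?_, ?_⟩
  · calc ‖Z₀ ∘L N.orthogonalProjectionOnto‖ ≤ ‖Z₀‖ * ‖N.orthogonalProjectionOnto‖ :=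
          opNorm_comp_le _ _
      _ ≤ c * 1 := mul_le_mul (LinearMap.opNorm_extendOfNorm_le he hc h)
          (Submodule.orthogonalProjectionOnto_norm_le N) (norm_nonneg _) hc
      _ = c := mul_one c
  · ext x
    have hx : N.orthogonalProjectionOnto (Y x) = e x :=
      Submodule.orthogonalProjectionOnto_mem_subspace_eq_self (e x)
    simp only [comp_apply, hx]
    exact (LinearMap.extendOfNorm_eq he ⟨c, h⟩ x).symm

theorem ContinuousLinearMap.exists_eq_comp_of_range_le [CompleteSpace E] (X : E →L[𝕜] G)
    (Y : F →L[𝕜] G)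
    (h : LinearMap.range (X : E →ₗ[𝕜] G) ≤ LinearMap.range (Y : F →ₗ[𝕜] G)) :
    ∃ C : E →L[𝕜] F, X = Y ∘L C := by
  set K := LinearMap.ker (Y : F →ₗ[𝕜] G)
  have : CompleteSpace K := Y.isClosed_ker.completeSpace_coe
  have : CompleteSpace Kᗮ := K.isClosed_orthogonal.completeSpace_coe
  let Y₀ : Kᗮ →ₗ[𝕜] G := (Y : F →ₗ[𝕜] G) ∘ₗ Kᗮ.subtype
  have hY₀ : Function.Injective Y₀ := by
    refine (injective_iff_map_eq_zero Y₀).2 fun v hv ↦ ?_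
    exact Subtype.ext (Submodule.inf_orthogonal_eq_bot K |>.le ⟨hv, v.2⟩)
  have hrange : LinearMap.range (X : E →ₗ[𝕜] G) ≤ LinearMap.range Y₀ := by
    refine h.trans ?_
    rintro _ ⟨y, rfl⟩
    refine ⟨⟨y - K.starProjection y, K.sub_starProjection_mem_orthogonal y⟩, ?_⟩
    have hK : Y (K.starProjection y) = 0 := K.starProjection_apply_mem y
    simp [Y₀, hK]
  let C₀ : E →ₗ[𝕜] Kᗮ := (X : E →ₗ[𝕜] G).codRestrictOfInjective Y₀ hY₀
    fun x ↦ hrange (LinearMap.mem_range_self _ x)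
  have hC₀ : ∀ x, Y (C₀ x) = X x :=
    LinearMap.codRestrictOfInjective_comp_apply (X : E →ₗ[𝕜] G) Y₀ hY₀ _
  have hgraph : IsClosed (C₀.graph : Set (E × Kᗮ)) := by
    have : (C₀.graph : Set (E × Kᗮ)) = {p | Y p.2 = X p.1} := by
      ext ⟨x, v⟩
      simp only [SetLike.mem_coe, LinearMap.mem_graph_iff, Set.mem_ofPred_eq]
      exact ⟨fun hv ↦ hv ▸ hC₀ x, fun hv ↦ hY₀ (hv.trans (hC₀ x).symm)⟩
    rw [this]
    exact isClosed_eq (by fun_prop) (by fun_prop)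
  refine ⟨Kᗮ.subtypeL ∘L ofIsClosedGraph hgraph, ?_⟩
  ext x
  exact (hC₀ x).symm

theorem starProjection_topologicalClosure_range_comp (S : E →L[𝕜] F) :
    (LinearMap.range (S : E →ₗ[𝕜] F)).topologicalClosure.starProjection ∘L S = S := by
  ext x
  exact Submodule.starProjection_eq_self_iff.2
    (Submodule.le_topologicalClosure _ (LinearMap.mem_range_self _ x))

end Factorization

section SelfAdjoint

variable {𝕜 H : Type*} [RCLike 𝕜] [NormedAddCommGroup H] [InnerProductSpace 𝕜 H] [CompleteSpace H]

theorem IsSelfAdjoint.eq_comp_adjoint {R Q W : H →L[𝕜] H} (hR : IsSelfAdjoint R)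
    (hQ : IsSelfAdjoint Q) (h : R = W ∘L Q) : R = Q ∘L adjoint W := by
  rw [← hR.adjoint_eq, h, adjoint_comp, hQ.adjoint_eq]

theorem IsSelfAdjoint.eq_adjoint_comp {R Q W : H →L[𝕜] H} (hR : IsSelfAdjoint R)
    (hQ : IsSelfAdjoint Q) (h : R = Q ∘L W) : R = adjoint W ∘L Q := by
  rw [← hR.adjoint_eq, h, adjoint_comp, hQ.adjoint_eq]

theorem IsSelfAdjoint.comp_starProjection_topologicalClosure_range {S : H →L[𝕜] H}
    (hS : IsSelfAdjoint S) :
    S ∘L (LinearMap.range (S : H →ₗ[𝕜] H)).topologicalClosure.starProjection = S := by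
  conv_rhs => rw [← hS.adjoint_eq, ← starProjection_topologicalClosure_range_comp S]
  rw [adjoint_comp, hS.adjoint_eq, (isSelfAdjoint_starProjection _).adjoint_eq]

end SelfAdjoint

section Real

variable {H : Type*} [NormedAddCommGroup H] [InnerProductSpace ℝ H]

theorem ContinuousLinearMap.IsPositive.inner_sq_le {T : H →L[ℝ] H} (hT : T.IsPositive) (x y : H) :
    ⟪T x, y⟫ ^ 2 ≤ ⟪T x, x⟫ * ⟪T y, y⟫ := by
  have hquad : ∀ t : ℝ, 0 ≤ ⟪T y, y⟫ * (t * t) + 2 * ⟪T x, y⟫ * t + ⟪T x, x⟫ := fun t ↦ by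
    have hyx : ⟪T y, x⟫ = ⟪T x, y⟫ := by
      rw [hT.inner_left_eq_inner_right, real_inner_comm]
    have := hT.inner_nonneg_left (x + t • y)
    simp only [map_add, map_smul, inner_add_left, inner_add_right, real_inner_smul_left,
      real_inner_smul_right, hyx] at this
    linarith
  have := discrim_le_zero hquad
  rw [discrim] at this
  linarith

theorem ContinuousLinearMap.IsPositive.inner_le_mul_norm_mul_norm {R S : H →L[ℝ] H}
    (hR : R.IsPositive) {c : ℝ} (hc : 0 ≤ c) (h : ∀ x, ⟪R x, x⟫ ≤ c * ‖S x‖ ^ 2) (x y : H) :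
    ⟪R x, y⟫ ≤ c * ‖S x‖ * ‖S y‖ := by
  refine (abs_le_of_sq_le_sq' ?_ (by positivity)).2
  calc ⟪R x, y⟫ ^ 2 ≤ ⟪R x, x⟫ * ⟪R y, y⟫ := hR.inner_sq_le x y
    _ ≤ (c * ‖S x‖ ^ 2) * (c * ‖S y‖ ^ 2) :=
        mul_le_mul (h x) (h y) (hR.inner_nonneg_left y) (by positivity)
    _ = (c * ‖S x‖ * ‖S y‖) ^ 2 := by ring

theorem norm_le_of_mem_closure_of_inner_le {s : Set H} {v : H} (hv : v ∈ closure s) {K : ℝ}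
    (hK : 0 ≤ K) (h : ∀ w ∈ s, ⟪v, w⟫ ≤ K * ‖w‖) : ‖v‖ ≤ K := by
  have hclosed : IsClosed {w : H | ⟪v, w⟫ ≤ K * ‖w‖} := isClosed_le (by fun_prop) (by fun_prop)
  have hvv : ‖v‖ * ‖v‖ ≤ K * ‖v‖ := by
    rw [← real_inner_self_eq_norm_mul_norm]
    exact closure_minimal h hclosed hv
  rcases (norm_nonneg v).eq_or_lt with h0 | h0
  · rw [← h0]; exact hK
  · exact le_of_mul_le_mul_right hvv h0

variable [CompleteSpace H]

theorem IsSelfAdjoint.inner_apply_apply_self_eq_norm_sq {S : H →L[ℝ] H} (hS : IsSelfAdjoint S)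
    (x : H) : ⟪S (S x), x⟫ = ‖S x‖ ^ 2 :=
  (hS.isSymmetric _ _).trans (real_inner_self_eq_norm_sq _)

theorem inner_comp_comp_apply_self_le {S T : H →L[ℝ] H} (hS : IsSelfAdjoint S) (x : H) :
    ⟪(S ∘L T ∘L S) x, x⟫ ≤ ‖T‖ * ‖S x‖ ^ 2 :=
  calc ⟪(S ∘L T ∘L S) x, x⟫ = ⟪T (S x), S x⟫ := hS.isSymmetric _ _
    _ ≤ ‖T (S x)‖ * ‖S x‖ := real_inner_le_norm _ _
    _ ≤ ‖T‖ * ‖S x‖ * ‖S x‖ := mul_le_mul_of_nonneg_right (T.le_opNorm _) (norm_nonneg _)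
    _ = ‖T‖ * ‖S x‖ ^ 2 := by ring

theorem inner_apply_self_le_of_eq_comp {R S W : H →L[ℝ] H} (hR : IsSelfAdjoint R)
    (hS : IsSelfAdjoint S) {c : ℝ} (hc : 0 < c) (hW : ‖W‖ ≤ c) (hRW : R = W ∘L S ∘L S)
    (x : H) : ⟪R x, x⟫ ≤ c * ‖S x‖ ^ 2 := by
  have hSS : IsSelfAdjoint (S * S) := by simpa [hS.star_eq] using IsSelfAdjoint.star_mul_self S
  have hRW' := hR.eq_comp_adjoint hSS hRW
  have hshift : ∀ u w, ⟪S (adjoint W u), S w⟫ = ⟪R u, w⟫ := fun u w ↦ by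
    rw [hRW']; exact (hS.isSymmetric _ _).symm
  have hshift' : ∀ u w, ⟪R u, w⟫ = ⟪S u, S (adjoint W w)⟫ := fun u w ↦
    (hR.isSymmetric u w).trans <|
      (real_inner_comm _ _).trans <| (hshift w u).symm.trans (real_inner_comm _ _)
  set v : ℕ → H := fun n ↦ (adjoint W)^[n] x
  have hv : ∀ n, v (n + 1) = adjoint W (v n) := fun n ↦ Function.iterate_succ_apply' _ _ _
  set g : ℕ → ℝ := fun n ↦ ‖S (v n)‖
  have hvle : ∀ n, ‖v n‖ ≤ c ^ n * ‖x‖ := by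
    intro n
    induction n with
    | zero => simp [v]
    | succ n ih =>
      calc ‖v (n + 1)‖ ≤ ‖adjoint W‖ * ‖v n‖ := hv n ▸ le_opNorm _ _
        _ ≤ c * (c ^ n * ‖x‖) := by rw [LinearIsometryEquiv.norm_map]; gcongr
        _ = c ^ (n + 1) * ‖x‖ := by ring
  have hgle : ∀ n, g n ≤ ‖S‖ * ‖x‖ * c ^ n := fun n ↦
    calc g n ≤ ‖S‖ * ‖v n‖ := le_opNorm _ _
      _ ≤ ‖S‖ * (c ^ n * ‖x‖) := by gcongr; exact hvle n
      _ = ‖S‖ * ‖x‖ * c ^ n := by ring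
  have hlc : ∀ n, g (n + 1) ^ 2 ≤ g n * g (n + 2) := fun n ↦
    calc g (n + 1) ^ 2 = ⟪S (v (n + 1)), S (v (n + 1))⟫ := (real_inner_self_eq_norm_sq _).symm
      _ = ⟪S (v n), S (v (n + 2))⟫ := by
        rw [show n + 2 = n + 1 + 1 from rfl, hv (n + 1), hv n, hshift, hshift']
      _ ≤ g n * g (n + 2) := real_inner_le_norm _ _
  have hg10 := le_mul_of_sq_le_mul_of_le_mul_pow (fun n ↦ norm_nonneg _) hlc hc hgle
  calc ⟪R x, x⟫ = ⟪S (v 1), S (v 0)⟫ := (hshift x x).symm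
    _ ≤ g 1 * g 0 := real_inner_le_norm _ _
    _ ≤ c * g 0 * g 0 := mul_le_mul_of_nonneg_right hg10 (norm_nonneg _)
    _ = c * ‖S x‖ ^ 2 := by simp [g, v]; ring

theorem inner_apply_self_le_of_norm_le {R S : H →L[ℝ] H} (hR : IsSelfAdjoint R)
    (hS : IsSelfAdjoint S) {c : ℝ} (hc : 0 < c) (h : ∀ x, ‖R x‖ ≤ c * ‖S (S x)‖) (x : H) :
    ⟪R x, x⟫ ≤ c * ‖S x‖ ^ 2 := by
  obtain ⟨W, hW, hRW⟩ := R.exists_eq_comp_of_norm_le (S ∘L S) hc.le h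
  exact inner_apply_self_le_of_eq_comp hR hS hc hW hRW x

theorem exists_isPositive_conj_eq_of_conj_eq {S T₀ R : H →L[ℝ] H} (hS : IsSelfAdjoint S)
    (hR : R.IsPositive) (h : R = S ∘L T₀ ∘L S) :
    ∃ T : H →L[ℝ] H, T.IsPositive ∧ R = S ∘L T ∘L S := by
  set N := (LinearMap.range (S : H →ₗ[ℝ] H)).topologicalClosure
  set T₁ := (2⁻¹ : ℝ) • (T₀ + adjoint T₀)
  have hT₁ : IsSelfAdjoint T₁ :=
    (IsSelfAdjoint.all (2⁻¹ : ℝ)).smul (IsSelfAdjoint.add_star_self T₀)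
  have hRT₁ : R = S ∘L T₁ ∘L S := by
    have h' : R = S ∘L adjoint T₀ ∘L S := by
      conv_lhs => rw [← hR.isSelfAdjoint.adjoint_eq, h]
      simp only [adjoint_comp, hS.adjoint_eq, comp_assoc]
    simp only [T₁, comp_smul, smul_comp, comp_add, add_comp, ← h, ← h']
    rw [← two_smul ℝ R, smul_smul, inv_mul_cancel₀ two_ne_zero, one_smul]
  have hT₁N : ∀ w ∈ N, 0 ≤ ⟪T₁ w, w⟫ := by
    have hclosed : IsClosed {w : H | 0 ≤ ⟪T₁ w, w⟫} := isClosed_le (by fun_prop) (by fun_prop)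
    intro w hw
    rw [← SetLike.mem_coe, Submodule.topologicalClosure_coe] at hw
    refine closure_minimal ?_ hclosed hw
    rintro _ ⟨x, rfl⟩
    calc (0 : ℝ) ≤ ⟪R x, x⟫ := hR.inner_nonneg_left x
      _ = ⟪T₁ (S x), S x⟫ := by rw [hRT₁]; exact hS.isSymmetric _ _
  refine ⟨N.starProjection ∘L T₁ ∘L N.starProjection, ?_, ?_⟩
  · rw [isPositive_iff']
    refine ⟨?_, fun u ↦ ?_⟩
    · have := hT₁.conjugate N.starProjection
      rwa [(isSelfAdjoint_starProjection N).star_eq, mul_assoc] at this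
    · calc (0 : ℝ) ≤ ⟪T₁ (N.starProjection u), N.starProjection u⟫ :=
            hT₁N _ (N.starProjection_apply_mem u)
        _ = _ := ((isSelfAdjoint_starProjection N).isSymmetric _ _).symm
  · calc R = (S ∘L N.starProjection) ∘L T₁ ∘L (N.starProjection ∘L S) := by
          rw [hS.comp_starProjection_topologicalClosure_range,
            starProjection_topologicalClosure_range_comp, hRT₁]
      _ = S ∘L (N.starProjection ∘L T₁ ∘L N.starProjection) ∘L S := by simp only [comp_assoc]

theorem exists_isPositive_conj_eq_of_inner_le {S R : H →L[ℝ] H} (hS : IsSelfAdjoint S)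
    (hR : R.IsPositive) {c : ℝ} (hc : 0 ≤ c) (h : ∀ x, ⟪R x, x⟫ ≤ c * ‖S x‖ ^ 2) :
    ∃ T : H →L[ℝ] H, T.IsPositive ∧ R = S ∘L T ∘L S := by
  have hRS := hR.inner_le_mul_norm_mul_norm hc h
  have hnorm : ∀ x, ‖R x‖ ≤ c * ‖S‖ * ‖S x‖ := fun x ↦ by
    have h1 : ‖R x‖ * ‖R x‖ ≤ (c * ‖S‖ * ‖S x‖) * ‖R x‖ :=
      calc ‖R x‖ * ‖R x‖ = ⟪R x, R x⟫ := (real_inner_self_eq_norm_mul_norm _).symm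
        _ ≤ c * ‖S x‖ * ‖S (R x)‖ := hRS x (R x)
        _ ≤ c * ‖S x‖ * (‖S‖ * ‖R x‖) := by gcongr; exact le_opNorm _ _
        _ = (c * ‖S‖ * ‖S x‖) * ‖R x‖ := by ring
    rcases (norm_nonneg (R x)).eq_or_lt with h0 | h0
    · rw [← h0]; positivity
    · exact le_of_mul_le_mul_right h1 h0
  obtain ⟨Z, -, hRZ⟩ := R.exists_eq_comp_of_norm_le S (by positivity) hnorm
  have hRZ' := hR.isSelfAdjoint.eq_comp_adjoint hS hRZ
  set N := (LinearMap.range (S : H →ₗ[ℝ] H)).topologicalClosure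
  have hV : ∀ x, ‖N.starProjection (adjoint Z x)‖ ≤ c * ‖S x‖ := fun x ↦ by
    refine norm_le_of_mem_closure_of_inner_le (s := LinearMap.range (S : H →ₗ[ℝ] H)) ?_
      (by positivity) ?_
    · rw [← Submodule.topologicalClosure_coe]; exact N.starProjection_apply_mem _
    · rintro _ ⟨y, rfl⟩
      calc ⟪N.starProjection (adjoint Z x), S y⟫ = ⟪adjoint Z x, N.starProjection (S y)⟫ :=
            (isSelfAdjoint_starProjection N).isSymmetric _ _
        _ = ⟪R x, y⟫ := by
          rw [← comp_apply N.starProjection S, starProjection_topologicalClosure_range_comp,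
            adjoint_inner_left, ← comp_apply, ← hRZ]
          exact (hR.inner_left_eq_inner_right x y).symm
        _ ≤ c * ‖S x‖ * ‖S y‖ := hRS x y
  obtain ⟨T₀, -, hT₀⟩ := (N.starProjection ∘L adjoint Z).exists_eq_comp_of_norm_le S hc hV
  have hRT₀ : R = S ∘L T₀ ∘L S :=
    calc R = (S ∘L N.starProjection) ∘L adjoint Z := by
          rw [hS.comp_starProjection_topologicalClosure_range, hRZ']
      _ = S ∘L T₀ ∘L S := by rw [comp_assoc, hT₀]
  exact exists_isPositive_conj_eq_of_conj_eq hS hR hRT₀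

theorem exists_inner_apply_self_le_of_range_le {S U R : H →L[ℝ] H} (hS : IsSelfAdjoint S)
    (hU : IsSelfAdjoint U) (hR : IsSelfAdjoint R) (hR2 : R ∘L R = S ∘L (U ∘L U) ∘L S)
    (hrange : LinearMap.range (U : H →ₗ[ℝ] H) ≤ LinearMap.range (S : H →ₗ[ℝ] H)) :
    ∃ c, 0 ≤ c ∧ ∀ x, ⟪R x, x⟫ ≤ c * ‖S x‖ ^ 2 := by
  obtain ⟨C, hC⟩ := U.exists_eq_comp_of_range_le S hrange
  have hUC : U = adjoint C ∘L S := hU.eq_adjoint_comp hS hC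
  have hRU : ∀ x, ‖R x‖ = ‖U (S x)‖ := fun x ↦ by
    rw [← sq_eq_sq₀ (norm_nonneg _) (norm_nonneg _), ← hR.inner_apply_apply_self_eq_norm_sq,
      ← hU.inner_apply_apply_self_eq_norm_sq, ← comp_apply R R, hR2]
    exact hS.isSymmetric _ _
  refine ⟨‖adjoint C‖ + 1, by positivity, inner_apply_self_le_of_norm_le hR hS (by positivity)
    fun x ↦ ?_⟩
  calc ‖R x‖ = ‖adjoint C (S (S x))‖ := by rw [hRU, hUC]; rfl
    _ ≤ ‖adjoint C‖ * ‖S (S x)‖ := le_opNorm _ _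
    _ ≤ (‖adjoint C‖ + 1) * ‖S (S x)‖ := by gcongr; linarith

end Real

theorem stmt8_general {H : Type*} [NormedAddCommGroup H] [InnerProductSpace ℝ H]
    [CompleteSpace H]
    (A B sqrtA sqrtB R : H →L[ℝ] H)
    (hsqrtA : sqrtA.IsPositive) (hsqrtA2 : sqrtA ∘L sqrtA = A)
    (hsqrtB : sqrtB.IsPositive) (hsqrtB2 : sqrtB ∘L sqrtB = B)
    (hR : R.IsPositive) (hR2 : R ∘L R = sqrtA ∘L B ∘L sqrtA) :
    ((∃ c : ℝ, 0 ≤ c ∧ ∀ x : H, ⟪R x, x⟫ ≤ c * ⟪A x, x⟫) ↔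
        (∃ T : H →L[ℝ] H, T.IsPositive ∧ R = sqrtA ∘L T ∘L sqrtA)) ∧
      (LinearMap.range (sqrtB : H →ₗ[ℝ] H) ≤ LinearMap.range (sqrtA : H →ₗ[ℝ] H) →
        (∃ c : ℝ, 0 ≤ c ∧ ∀ x : H, ⟪R x, x⟫ ≤ c * ⟪A x, x⟫) ∧
          (∃ T : H →L[ℝ] H, T.IsPositive ∧ R = sqrtA ∘L T ∘L sqrtA)) := by
  have hS := hsqrtA.isSelfAdjoint
  have hA : ∀ x, ⟪A x, x⟫ = ‖sqrtA x‖ ^ 2 := fun x ↦ by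
    rw [← hsqrtA2]; exact hS.inner_apply_apply_self_eq_norm_sq x
  simp only [hA]
  have hiff : (∃ c : ℝ, 0 ≤ c ∧ ∀ x : H, ⟪R x, x⟫ ≤ c * ‖sqrtA x‖ ^ 2) ↔
      ∃ T : H →L[ℝ] H, T.IsPositive ∧ R = sqrtA ∘L T ∘L sqrtA :=
    ⟨fun ⟨_, hc, h⟩ ↦ exists_isPositive_conj_eq_of_inner_le hS hR hc h,
      fun ⟨T, _, hT⟩ ↦ ⟨‖T‖, norm_nonneg T, hT ▸ inner_comp_comp_apply_self_le hS⟩⟩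
  refine ⟨hiff, fun hrange ↦ ?_⟩
  have hi := exists_inner_apply_self_le_of_range_le hS hsqrtB.isSelfAdjoint hR.isSelfAdjoint
    (hsqrtB2 ▸ hR2) hrange
  exact ⟨hi, hiff.1 hi⟩

/-- Let `A, B` be positive compact operators on a real separable Hilbert
space with `ker A ⊆ ker B`, let `√A` be the positive square root of `A`, and let `R` be the
positive square root of `√A ∘ B ∘ √A`. Then the domination `⟨Rx,x⟩ ≤ c·⟨Ax,x⟩` for some
`c ≥ 0` is equivalent to the existence of a positive continuous operator `T` with
`R = √A ∘ T ∘ √A`; and both hold whenever `range √B ⊆ range √A`. -/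
theorem stmt8 {H : Type*} [NormedAddCommGroup H] [InnerProductSpace ℝ H]
    [CompleteSpace H] [TopologicalSpace.SeparableSpace H]
    (A B sqrtA sqrtB R : H →L[ℝ] H)
    (hA : A.IsPositive) (hAc : IsCompactOperator (⇑A))
    (hB : B.IsPositive) (hBc : IsCompactOperator (⇑B))
    (hker : LinearMap.ker (A : H →ₗ[ℝ] H) ≤ LinearMap.ker (B : H →ₗ[ℝ] H))
    (hsqrtA : sqrtA.IsPositive) (hsqrtA2 : sqrtA ∘L sqrtA = A)
    (hsqrtB : sqrtB.IsPositive) (hsqrtB2 : sqrtB ∘L sqrtB = B)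
    (hR : R.IsPositive) (hR2 : R ∘L R = sqrtA ∘L B ∘L sqrtA) :
    ((∃ c : ℝ, 0 ≤ c ∧ ∀ x : H, ⟪R x, x⟫ ≤ c * ⟪A x, x⟫) ↔
        (∃ T : H →L[ℝ] H, T.IsPositive ∧ R = sqrtA ∘L T ∘L sqrtA)) ∧
      (LinearMap.range (sqrtB : H →ₗ[ℝ] H) ≤ LinearMap.range (sqrtA : H →ₗ[ℝ] H) →
        (∃ c : ℝ, 0 ≤ c ∧ ∀ x : H, ⟪R x, x⟫ ≤ c * ⟪A x, x⟫) ∧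
          (∃ T : H →L[ℝ] H, T.IsPositive ∧ R = sqrtA ∘L T ∘L sqrtA)) :=
  stmt8_general A B sqrtA sqrtB R hsqrtA hsqrtA2 hsqrtB hsqrtB2 hR hR2
end

section
/- Let μ be a centered Gaussian measure on a real separable Hilbert space H with covariance operator A. If D is a linear subspace of H with D ⊆ closure(range A) such that μ-almost every x ∈ H belongs to D, then the closure of D equals closure(range A); that is, D is dense in the closure of the range of A. -/
/-! Since `μ` is carried by `D`, for `y ⟂ D` the covariance `⟪A h, y⟫ = ∫ ⟪h, x⟫ ⟪y, x⟫ dμ`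
vanishes, so `range A ⊆ Dᗮᗮ = closure D`. -/

open MeasureTheory ProbabilityTheory
open scoped RealInnerProductSpace NNReal

section Covariance

variable {H : Type*} [NormedAddCommGroup H] [InnerProductSpace ℝ H] [MeasurableSpace H]
  {μ : Measure H} {A : H →L[ℝ] H} {D : Submodule ℝ H}

theorem inner_covariance_eq_zero_of_mem_orthogonal
    (hcov : ∀ h g : H, ⟪A h, g⟫ = ∫ x, ⟪h, x⟫ * ⟪g, x⟫ ∂μ) (hae : ∀ᵐ x ∂μ, x ∈ D)
    (h : H) {y : H} (hy : y ∈ Dᗮ) : ⟪A h, y⟫ = 0 := by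
  have hzero : (fun x => ⟪h, x⟫ * ⟪y, x⟫) =ᵐ[μ] fun _ => 0 := by
    filter_upwards [hae] with x hx
    rw [Submodule.inner_left_of_mem_orthogonal hx hy, mul_zero]
  rw [hcov h y, integral_congr_ae hzero, integral_zero]

theorem range_covariance_le_topologicalClosure [CompleteSpace H]
    (hcov : ∀ h g : H, ⟪A h, g⟫ = ∫ x, ⟪h, x⟫ * ⟪g, x⟫ ∂μ) (hae : ∀ᵐ x ∂μ, x ∈ D) :
    LinearMap.range (A : H →ₗ[ℝ] H) ≤ D.topologicalClosure := by
  rintro _ ⟨h, rfl⟩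
  rw [← Submodule.orthogonal_orthogonal_eq_closure]
  intro y hy
  rw [real_inner_comm]
  exact inner_covariance_eq_zero_of_mem_orthogonal hcov hae h hy

end Covariance

theorem stmt18_general {H : Type*} [NormedAddCommGroup H] [InnerProductSpace ℝ H]
    [CompleteSpace H]
    [MeasurableSpace H]
    (μ : Measure H)
    (A : H →L[ℝ] H)
    (hcov : ∀ h g : H, ⟪A h, g⟫ = ∫ x, ⟪h, x⟫ * ⟪g, x⟫ ∂μ)
    (D : Submodule ℝ H)
    (hDsub : (D : Set H) ⊆ closure (LinearMap.range (A : H →ₗ[ℝ] H) : Set H))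
    (hae : ∀ᵐ x ∂μ, x ∈ D) :
    closure (D : Set H) = closure (LinearMap.range (A : H →ₗ[ℝ] H) : Set H) := by
  refine subset_antisymm (closure_minimal hDsub isClosed_closure) ?_
  have hrange := range_covariance_le_topologicalClosure hcov hae
  exact closure_minimal hrange D.isClosed_topologicalClosure

/-- If `μ` is a centered Gaussian measure on a real separable Hilbert
space `H` with covariance operator `A`, and `D ⊆ closure (range A)` is a linear subspace
of full `μ`-measure, then `D` is dense in the closure of the range of `A`. -/
theorem stmt18 {H : Type*} [NormedAddCommGroup H] [InnerProductSpace ℝ H]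
    [CompleteSpace H] [TopologicalSpace.SeparableSpace H]
    [MeasurableSpace H] [BorelSpace H]
    (μ : Measure H) [IsProbabilityMeasure μ]
    (hgauss : ∀ L : H →L[ℝ] ℝ, ∃ (m : ℝ) (v : ℝ≥0), μ.map L = gaussianReal m v)
    (hcent : ∫ x, x ∂μ = 0)
    (A : H →L[ℝ] H)
    (hApos : A.IsPositive) (hAc : IsCompactOperator (⇑A))
    (hcov : ∀ h g : H, ⟪A h, g⟫ = ∫ x, ⟪h, x⟫ * ⟪g, x⟫ ∂μ)
    (D : Submodule ℝ H)
    (hDsub : (D : Set H) ⊆ closure (LinearMap.range (A : H →ₗ[ℝ] H) : Set H))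
    (hae : ∀ᵐ x ∂μ, x ∈ D) :
    closure (D : Set H) = closure (LinearMap.range (A : H →ₗ[ℝ] H) : Set H) :=
  stmt18_general μ A hcov D hDsub hae
end
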